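/- Let G be a countably infinite cancellative semigroup, let (F_n) be a Følner sequence in G, and let A ⊆ G. Then A is (F_n)-normal if and only if for every nonempty finite set K ⊆ G, the (F_n)-density of ⋂_{h∈K} h⁻¹A exists and equals 2^{−|K|}, i.e., |F_n ∩ ⋂_{h∈K} h⁻¹A|/|F_n| → 2^{−|K|}, where h⁻¹A = {g ∈ G : h·g ∈ A}. -/

import Mathlib

/-!
Writing `x_h(g) = 1_A(h g)`, the indicator of the block `B` on `K` is
`∏_{B h = 1} x_h · ∏_{B h = 0} (1 - x_h)`. Expanding the second product expresses it as an
alternating sum of the indicators `∏_{h ∈ L} x_h` of the intersections `⋂_{h ∈ L} h⁻¹A`.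
Averaging over `F n` turns this into the same linear relation between block frequencies and
intersection densities, and the constant values `1/2` satisfy it as well.
-/

open Filter

open scoped Classical in
def IsFolner {G : Type*} [Mul G] (F : ℕ → Finset G) : Prop :=
  (∀ n, (F n).Nonempty) ∧
  ∀ g : G, Tendsto
    (fun n => (((F n).filter (fun h => g * h ∈ F n)).card : ℝ) / (F n).card)
    atTop (nhds 1)

open scoped Classical in
def IsNormalSet {G : Type*} [Mul G] (F : ℕ → Finset G) (A : Set G) : Prop :=
  ∀ K : Finset G, K.Nonempty → ∀ B : G → Bool,
    Tendsto
      (fun n =>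
        (((F n).filter (fun g => ∀ h ∈ K, (h * g ∈ A ↔ B h = true))).card : ℝ) / (F n).card)
      atTop (nhds ((1 / 2 : ℝ) ^ K.card))

open Finset

section ProductExpansion

variable {ι : Type*} [DecidableEq ι]

theorem prod_mul_prod_one_sub_eq_sum_powerset {R : Type*} [CommRing R] {T U : Finset ι}
    (hTU : Disjoint T U) (x : ι → R) :
    (∏ i ∈ T, x i) * ∏ i ∈ U, (1 - x i) = ∑ S ∈ U.powerset, (-1) ^ #S * ∏ i ∈ T ∪ S, x i := by
  simp_rw [sub_eq_add_neg, prod_one_add, mul_sum, prod_neg]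
  refine sum_congr rfl fun S hS => ?_
  rw [prod_union (disjoint_of_subset_right (mem_powerset.1 hS) hTU)]
  ring

theorem tendsto_average_prod_mul_prod_one_sub {𝕜 X : Type*} [Field 𝕜] [TopologicalSpace 𝕜]
    [IsTopologicalRing 𝕜] {T U : Finset ι} (hTU : Disjoint T U) (F : ℕ → Finset X)
    (x : ι → X → 𝕜) (p : ι → 𝕜)
    (h : ∀ S ⊆ U, Tendsto (fun n => (∑ g ∈ F n, ∏ i ∈ T ∪ S, x i g) / #(F n)) atTop
      (nhds (∏ i ∈ T ∪ S, p i))) :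
    Tendsto (fun n => (∑ g ∈ F n, (∏ i ∈ T, x i g) * ∏ i ∈ U, (1 - x i g)) / #(F n)) atTop
      (nhds ((∏ i ∈ T, p i) * ∏ i ∈ U, (1 - p i))) := by
  have expand : ∀ n, (∑ g ∈ F n, (∏ i ∈ T, x i g) * ∏ i ∈ U, (1 - x i g)) / #(F n) =
      ∑ S ∈ U.powerset, (-1) ^ #S * ((∑ g ∈ F n, ∏ i ∈ T ∪ S, x i g) / #(F n)) := fun n => by
    simp_rw [prod_mul_prod_one_sub_eq_sum_powerset hTU]
    rw [sum_comm, sum_div]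
    simp_rw [← mul_sum, mul_div_assoc]
  simp_rw [expand, prod_mul_prod_one_sub_eq_sum_powerset hTU]
  exact tendsto_finsetSum _ fun S hS => (h S (mem_powerset.1 hS)).const_mul _

end ProductExpansion

theorem ite_forall_mem_iff_eq_prod_mul_prod_one_sub {ι R : Type*} [CommRing R]
    (K : Finset ι) (P : ι → Prop) (b : ι → Bool) [DecidablePred P] :
    (if ∀ i ∈ K, (P i ↔ b i = true) then (1 : R) else 0) =
      (∏ i ∈ K with b i = true, if P i then 1 else 0) *
        ∏ i ∈ K with ¬b i = true, (1 - if P i then 1 else 0) := by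
  rw [← prod_boole, ← prod_filter_mul_prod_filter_not K (b · = true)]
  congr 1 <;> refine prod_congr rfl fun i hi => ?_ <;> have := (mem_filter.1 hi).2
  · simp [this]
  · split_ifs <;> simp_all

open scoped Classical in
theorem normal_iff_intersections_density_general
    {G : Type*} [Semigroup G]
    (F : ℕ → Finset G) (hF : IsFolner F) (A : Set G) :
    IsNormalSet F A ↔
      ∀ K : Finset G, K.Nonempty →
        Tendsto
          (fun n => (((F n).filter (fun g => ∀ h ∈ K, h * g ∈ A)).card : ℝ) / (F n).card)
          atTop (nhds ((1 / 2 : ℝ) ^ K.card)) := by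
  constructor
  · intro hN K hK
    simpa using hN K hK fun _ => true
  intro hD K _ B
  set x : G → G → ℝ := fun h g => if h * g ∈ A then 1 else 0
  have card_eq_sum (L : Finset G) (n : ℕ) :
      (#((F n).filter fun g => ∀ h ∈ L, h * g ∈ A) : ℝ) = ∑ g ∈ F n, ∏ h ∈ L, x h g := by
    simp_rw [x, prod_boole, sum_boole]
  have intersection_density (L : Finset G) : Tendsto
      (fun n => (∑ g ∈ F n, ∏ h ∈ L, x h g) / #(F n)) atTop (nhds (∏ _h ∈ L, 1 / 2)) := by
    rcases L.eq_empty_or_nonempty with rfl | hL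
    · simp only [prod_empty, sum_const, nsmul_one]
      refine tendsto_const_nhds.congr fun n => (div_self ?_).symm
      exact Nat.cast_ne_zero.2 (hF.1 n).card_pos.ne'
    · simpa only [prod_const, ← card_eq_sum] using hD L hL
  convert tendsto_average_prod_mul_prod_one_sub (disjoint_filter_filter_not K K (B · = true))
    F x _ fun S _ => intersection_density _ using 2
  · rw [← sum_boole]
    exact congrArg (· / _) <| sum_congr rfl fun g _ =>
      ite_forall_mem_iff_eq_prod_mul_prod_one_sub K (· * g ∈ A) B
  · rw [prod_const, prod_const, ← card_filter_add_card_filter_not (B · = true), pow_add]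
    norm_num

open scoped Classical in
theorem normal_iff_intersections_density
    {G : Type*} [Semigroup G] [IsCancelMul G] [Countable G] [Infinite G]
    (F : ℕ → Finset G) (hF : IsFolner F) (A : Set G) :
    IsNormalSet F A ↔
      ∀ K : Finset G, K.Nonempty →
        Tendsto
          (fun n => (((F n).filter (fun g => ∀ h ∈ K, h * g ∈ A)).card : ℝ) / (F n).card)
          atTop (nhds ((1 / 2 : ℝ) ^ K.card)) :=
  normal_iff_intersections_density_general F hF A
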